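/- Let T be a decision tree whose root is an internal node, and let T_L and T_R be the subtrees rooted at the two children of the root. Then OPT_T = (OPT_{T_L} + OPT_{T_R} + sqrt((OPT_{T_L} − OPT_{T_R})² + 4)) / 2. -/

import Mathlib

/-- A deterministic decision tree over `{0,1}^n`: every internal node is labeled
by a query index `i ∈ Fin n` and has exactly two children (a 0-child and a
1-child); every leaf is labeled by an output value. -/
inductive DTree (n : ℕ) : Type where
  | leaf (b : Bool) : DTree n
  | node (i : Fin n) (t0 t1 : DTree n) : DTree n

namespace DTree

/-- On input `x`, from each internal node labeled `i` follow the edge to the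
`x i`-child; output the label of the leaf reached. -/
def eval {n : ℕ} : DTree n → (Fin n → Bool) → Bool
  | leaf b, _ => b
  | node i t0 t1, x => if x i then t1.eval x else t0.eval x

/-- `DTSize`: the total number of nodes of the tree. -/
def size {n : ℕ} : DTree n → ℕ
  | leaf _ => 1
  | node _ t0 t1 => 1 + t0.size + t1.size

/-- The depth: the maximum number of edges on a root-to-leaf path. -/
def depth {n : ℕ} : DTree n → ℕ
  | leaf _ => 0
  | node _ t0 t1 => 1 + max t0.depth t1.depth

/-- The rank of a binary tree: a leaf has rank 0; an internal node whose two
children have ranks `r₁, r₂` has rank `max r₁ r₂` if `r₁ ≠ r₂`, and `r₁ + 1`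
if `r₁ = r₂`. -/
def rank {n : ℕ} : DTree n → ℕ
  | leaf _ => 0
  | node _ t0 t1 => if t0.rank = t1.rank then t0.rank + 1 else max t0.rank t1.rank

end DTree

/-- The decision tree `t` computes the total Boolean function `f`. -/
def ComputesFn {n : ℕ} (t : DTree n) (f : (Fin n → Bool) → Bool) : Prop :=
  ∀ x, t.eval x = f x

/-- An assignment of one real weight to each edge of a binary tree, recorded as a
tree of the same shape: at every internal node, `w0` is the weight of the edge to
the 0-child and `w1` the weight of the edge to the 1-child. -/
inductive WTree : Type where
  | leaf : WTree
  | node (w0 w1 : ℝ) (c0 c1 : WTree) : WTree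

namespace WTree

/-- All weights are strictly positive. -/
def Pos : WTree → Prop
  | leaf => True
  | node w0 w1 c0 c1 => 0 < w0 ∧ 0 < w1 ∧ c0.Pos ∧ c1.Pos

/-- `max_{P ∈ P(T)} Σ_{e ∈ P} 1 / W_e`: the maximum over root-to-leaf paths `P`
of the sum of the inverse weights of the edges along `P`. -/
noncomputable def pathCost : WTree → ℝ
  | leaf => 0
  | node w0 w1 c0 c1 => max (1 / w0 + c0.pathCost) (1 / w1 + c1.pathCost)

/-- `max_{P ∈ P(T)} Σ_{e ∈ P̄} W_e`: the maximum over root-to-leaf paths `P` of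
the sum of the weights of the edges having exactly one endpoint on `P`
(i.e. at each internal node of `P`, the edge to the child off the path). -/
noncomputable def devCost : WTree → ℝ
  | leaf => 0
  | node w0 w1 c0 c1 => max (w1 + c0.devCost) (w0 + c1.devCost)

end WTree

/-- The weight assignment `w` has the same shape as the decision tree `t`
(i.e. it assigns a weight to each edge of `t`). -/
def MatchesW {n : ℕ} : DTree n → WTree → Prop
  | DTree.leaf _, WTree.leaf => True
  | DTree.node _ t0 t1, WTree.node _ _ c0 c1 => MatchesW t0 c0 ∧ MatchesW t1 c1
  | _, _ => False

/-- `OPT_T`: the infimum, over all positive weight assignments `W` to the edges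
of `T`, of `sqrt((max_{P} Σ_{e∈P̄} W_e) · (max_{P} Σ_{e∈P} 1/W_e))`.
For a single leaf this is `0`. -/
noncomputable def OPT {n : ℕ} (t : DTree n) : ℝ :=
  sInf {v : ℝ | ∃ w : WTree, MatchesW t w ∧ w.Pos ∧
    v = Real.sqrt (w.devCost * w.pathCost)}

-- ==== auxiliary development ====

namespace WTree

lemma devCost_nonneg : ∀ {w : WTree}, w.Pos → 0 ≤ w.devCost := by
  intro w
  induction w with
  | leaf => intro _; simp [devCost]
  | node w0 w1 c0 c1 ih0 ih1 =>
    rintro ⟨h0, h1, p0, p1⟩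
    have := ih0 p0
    simp only [devCost, le_max_iff]
    left; linarith

lemma pathCost_nonneg : ∀ {w : WTree}, w.Pos → 0 ≤ w.pathCost := by
  intro w
  induction w with
  | leaf => intro _; simp [pathCost]
  | node w0 w1 c0 c1 ih0 ih1 =>
    rintro ⟨h0, h1, p0, p1⟩
    have := ih0 p0
    have h0' : 0 < 1 / w0 := by positivity
    simp only [pathCost, le_max_iff]
    left; linarith

noncomputable def scale (l : ℝ) : WTree → WTree
  | leaf => leaf
  | node w0 w1 c0 c1 => node (l * w0) (l * w1) (c0.scale l) (c1.scale l)

lemma scale_pos {l : ℝ} (hl : 0 < l) : ∀ {w : WTree}, w.Pos → (w.scale l).Pos := by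
  intro w
  induction w with
  | leaf => intro _; trivial
  | node w0 w1 c0 c1 ih0 ih1 =>
    rintro ⟨h0, h1, p0, p1⟩
    exact ⟨mul_pos hl h0, mul_pos hl h1, ih0 p0, ih1 p1⟩

lemma devCost_scale {l : ℝ} (hl : 0 ≤ l) : ∀ w : WTree, (w.scale l).devCost = l * w.devCost := by
  intro w
  induction w with
  | leaf => simp [scale, devCost]
  | node w0 w1 c0 c1 ih0 ih1 =>
    simp only [scale, devCost, ih0, ih1, ← mul_add]
    rw [← mul_max_of_nonneg _ _ hl]

lemma pathCost_scale {l : ℝ} (hl : 0 < l) : ∀ w : WTree,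
    (w.scale l).pathCost = l⁻¹ * w.pathCost := by
  intro w
  induction w with
  | leaf => simp [scale, pathCost]
  | node w0 w1 c0 c1 ih0 ih1 =>
    have hl' : l ≠ 0 := ne_of_gt hl
    simp only [scale, pathCost, ih0, ih1]
    rw [mul_max_of_nonneg _ _ (by positivity : (0:ℝ) ≤ l⁻¹)]
    congr 1 <;> rw [mul_add, one_div, one_div, mul_inv] <;> ring

end WTree

def DTree.ones {n : ℕ} : DTree n → WTree
  | .leaf _ => .leaf
  | .node _ t0 t1 => .node 1 1 t0.ones t1.ones

lemma ones_matches {n : ℕ} : ∀ t : DTree n, MatchesW t t.ones := by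
  intro t
  induction t with
  | leaf b => trivial
  | node i t0 t1 ih0 ih1 => exact ⟨ih0, ih1⟩

lemma ones_pos {n : ℕ} : ∀ t : DTree n, (t.ones).Pos := by
  intro t
  induction t with
  | leaf b => trivial
  | node i t0 t1 ih0 ih1 => exact ⟨one_pos, one_pos, ih0, ih1⟩

lemma matchesW_scale {n : ℕ} {l : ℝ} : ∀ {t : DTree n} {w : WTree},
    MatchesW t w → MatchesW t (w.scale l) := by
  intro t
  induction t with
  | leaf b => intro w h; cases w with
    | leaf => trivial
    | node _ _ _ _ => exact absurd h (by simp [MatchesW])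
  | node i t0 t1 ih0 ih1 =>
    intro w h
    cases w with
    | leaf => exact absurd h (by simp [MatchesW])
    | node w0 w1 c0 c1 => exact ⟨ih0 h.1, ih1 h.2⟩

def Sset {n : ℕ} (t : DTree n) : Set ℝ :=
  {v : ℝ | ∃ w : WTree, MatchesW t w ∧ w.Pos ∧ v = Real.sqrt (w.devCost * w.pathCost)}

lemma OPT_eq_sInf {n : ℕ} (t : DTree n) : OPT t = sInf (Sset t) := rfl

lemma Sset_nonempty {n : ℕ} (t : DTree n) : (Sset t).Nonempty :=
  ⟨_, t.ones, ones_matches t, ones_pos t, rfl⟩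

lemma Sset_bddBelow {n : ℕ} (t : DTree n) : BddBelow (Sset t) := by
  refine ⟨0, ?_⟩
  rintro v ⟨w, _, _, rfl⟩
  exact Real.sqrt_nonneg _

lemma OPT_nonneg {n : ℕ} (t : DTree n) : 0 ≤ OPT t := by
  rw [OPT_eq_sInf]
  apply le_csInf (Sset_nonempty t)
  rintro v ⟨w, _, _, rfl⟩
  exact Real.sqrt_nonneg _

lemma OPT_le {n : ℕ} {t : DTree n} {w : WTree} (hm : MatchesW t w) (hp : w.Pos) :
    OPT t ≤ Real.sqrt (w.devCost * w.pathCost) := by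
  rw [OPT_eq_sInf]
  exact csInf_le (Sset_bddBelow t) ⟨w, hm, hp, rfl⟩

lemma sq_OPT_le {n : ℕ} {t : DTree n} {w : WTree} (hm : MatchesW t w) (hp : w.Pos) :
    (OPT t) ^ 2 ≤ w.devCost * w.pathCost := by
  have h := OPT_le hm hp
  have h0 := OPT_nonneg t
  have hnn : 0 ≤ w.devCost * w.pathCost :=
    mul_nonneg (WTree.devCost_nonneg hp) (WTree.pathCost_nonneg hp)
  calc (OPT t) ^ 2 ≤ (Real.sqrt (w.devCost * w.pathCost)) ^ 2 := by
        exact pow_le_pow_left₀ h0 h 2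
    _ = w.devCost * w.pathCost := Real.sq_sqrt hnn

/-- achieve both costs at most `m` if the product is at most `m^2` -/
lemma exists_near {n : ℕ} (t : DTree n) {m : ℝ} (hm : OPT t < m) :
    ∃ w : WTree, MatchesW t w ∧ w.Pos ∧ w.devCost ≤ m ∧ w.pathCost ≤ m := by
  obtain ⟨v, ⟨w, hmw, hpw, rfl⟩, hv⟩ :=
    exists_lt_of_csInf_lt (Sset_nonempty t) (by rw [← OPT_eq_sInf]; exact hm)
  have hd := WTree.devCost_nonneg hpw
  have hp := WTree.pathCost_nonneg hpw
  have hnn : 0 ≤ w.devCost * w.pathCost := mul_nonneg hd hp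
  have hm0 : 0 < m := lt_of_le_of_lt (Real.sqrt_nonneg _) hv
  have hdp : w.devCost * w.pathCost ≤ m ^ 2 := by
    have h1 := Real.sq_sqrt hnn
    nlinarith [Real.sqrt_nonneg (w.devCost * w.pathCost)]
  rcases eq_or_lt_of_le hd with h0 | h0
  · -- devCost = 0, scale up to shrink pathCost
    set l : ℝ := (w.pathCost + 1) / m with hl
    have hlpos : 0 < l := by positivity
    refine ⟨w.scale l, matchesW_scale hmw, WTree.scale_pos hlpos hpw, ?_, ?_⟩
    · rw [WTree.devCost_scale hlpos.le, ← h0]; simpa using hm0.le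
    · rw [WTree.pathCost_scale hlpos]
      rw [hl, inv_div]
      rw [div_mul_eq_mul_div]
      rw [div_le_iff₀ (by positivity)]
      nlinarith
  · -- devCost > 0, scale by m / devCost
    set l : ℝ := m / w.devCost with hl
    have hlpos : 0 < l := by positivity
    refine ⟨w.scale l, matchesW_scale hmw, WTree.scale_pos hlpos hpw, ?_, ?_⟩
    · rw [WTree.devCost_scale hlpos.le, hl, div_mul_cancel₀ _ (ne_of_gt h0)]
    · rw [WTree.pathCost_scale hlpos, hl, inv_div, div_mul_eq_mul_div,
        div_le_iff₀ hm0]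
      nlinarith

set_option maxHeartbeats 1000000 in
/-- The core arithmetic inequality for the lower bound. -/
lemma core (a b w0 w1 dL pL dR pR s : ℝ)
    (ha : 0 ≤ a) (hb : 0 ≤ b) (hw0 : 0 < w0) (hw1 : 0 < w1)
    (hdL : 0 ≤ dL) (hpL : 0 ≤ pL) (hdR : 0 ≤ dR) (hpR : 0 ≤ pR)
    (hL : a ^ 2 ≤ dL * pL) (hR : b ^ 2 ≤ dR * pR)
    (h1 : w1 + dL ≤ s) (h2 : w0 + dR ≤ s)
    (h3 : 1 / w0 + pL ≤ s) (h4 : 1 / w1 + pR ≤ s) :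
    a + b ≤ 2 * s ∧ (a - b) ^ 2 + 4 ≤ (2 * s - a - b) ^ 2 := by
  have hiw0 : 0 < 1 / w0 := by positivity
  have hiw1 : 0 < 1 / w1 := by positivity
  have hsdL : w1 ≤ s - dL := by linarith
  have hsdR : w0 ≤ s - dR := by linarith
  have hspL : 1 / w0 ≤ s - pL := by linarith
  have hspR : 1 / w1 ≤ s - pR := by linarith
  have e1 : 1 ≤ (s - dL) * (s - pR) := by
    have := mul_le_mul hsdL hspR hiw1.le (by linarith)
    rw [mul_one_div, div_self (ne_of_gt hw1)] at this
    linarith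
  have e2 : 1 ≤ (s - dR) * (s - pL) := by
    have := mul_le_mul hsdR hspL hiw0.le (by linarith)
    rw [mul_one_div, div_self (ne_of_gt hw0)] at this
    linarith
  -- 2a ≤ dL + pL and 2b ≤ dR + pR
  have hamL : 2 * a ≤ dL + pL := by nlinarith [sq_nonneg (dL - pL), sq_nonneg (dL + pL + 2 * a)]
  have hamR : 2 * b ≤ dR + pR := by nlinarith [sq_nonneg (dR - pR), sq_nonneg (dR + pR + 2 * b)]
  have hsa : a ≤ s := by linarith
  have hsb : b ≤ s := by linarith
  have q1 : (s - dL) * (s - pL) ≤ (s - a) ^ 2 := by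
    nlinarith [sq_nonneg (dL - pL),
      mul_nonneg (by linarith : (0:ℝ) ≤ dL + pL - 2 * a)
        (by linarith : (0:ℝ) ≤ 4 * s - 2 * a - dL - pL)]
  have q2 : (s - dR) * (s - pR) ≤ (s - b) ^ 2 := by
    nlinarith [sq_nonneg (dR - pR),
      mul_nonneg (by linarith : (0:ℝ) ≤ dR + pR - 2 * b)
        (by linarith : (0:ℝ) ≤ 4 * s - 2 * b - dR - pR)]
  have e12 : 1 ≤ ((s - dL) * (s - pR)) * ((s - dR) * (s - pL)) := by
    have h := mul_le_mul e1 e2 zero_le_one (zero_le_one.trans e1)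
    simpa using h
  have key4 : 1 ≤ ((s - a) ^ 2) * ((s - b) ^ 2) := by
    have hmm := mul_le_mul q1 q2 (mul_nonneg (by linarith) (by linarith)) (sq_nonneg _)
    have hre : ((s - dL) * (s - pR)) * ((s - dR) * (s - pL))
        = ((s - dL) * (s - pL)) * ((s - dR) * (s - pR)) := by ring
    linarith [e12, hmm, hre]
  have hX : 1 ≤ (s - a) * (s - b) := by
    have hXnn : 0 ≤ (s - a) * (s - b) := mul_nonneg (by linarith) (by linarith)
    nlinarith [key4, hXnn, mul_nonneg hXnn hXnn]
  constructor
  · linarith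
  · nlinarith [hX]


/-- Let `T` be a decision tree whose root is an internal node,
with subtrees `T_L`, `T_R` rooted at the two children of the root. Then
`OPT_T = (OPT_{T_L} + OPT_{T_R} + sqrt((OPT_{T_L} − OPT_{T_R})² + 4)) / 2`. -/
theorem OPT_node_eq {n : ℕ} (i : Fin n) (tL tR : DTree n) :
    OPT (DTree.node i tL tR) =
      (OPT tL + OPT tR + Real.sqrt ((OPT tL - OPT tR) ^ 2 + 4)) / 2 := by
  set a := OPT tL with haa
  set b := OPT tR with hbb
  have ha : 0 ≤ a := OPT_nonneg tL
  have hb : 0 ≤ b := OPT_nonneg tR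
  set r := Real.sqrt ((a - b) ^ 2 + 4) with hrr
  have hr0 : 0 ≤ r := Real.sqrt_nonneg _
  have hr2 : r ^ 2 = (a - b) ^ 2 + 4 := Real.sq_sqrt (by positivity)
  have hr_ab : a - b < r ∧ b - a < r := by
    constructor <;> nlinarith
  set c : ℝ := (a + b + r) / 2 with hcc
  have hca : a < c := by rcases hr_ab with ⟨_, h⟩; rw [hcc]; linarith
  have hcb : b < c := by rcases hr_ab with ⟨h, _⟩; rw [hcc]; linarith
  have hprod : (c - a) * (c - b) = 1 := by
    rw [hcc]; linear_combination hr2 / 4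
  have hc0 : 0 < c := lt_of_le_of_lt ha hca
  apply le_antisymm
  · -- upper bound
    apply le_of_forall_pos_le_add
    intro δ hδ
    obtain ⟨wL, hmL, hpL, hdL, hpLc⟩ := exists_near tL (by linarith : OPT tL < a + δ)
    obtain ⟨wR, hmR, hpR, hdR, hpRc⟩ := exists_near tR (by linarith : OPT tR < b + δ)
    set W : WTree := WTree.node (c - b) (c - a) wL wR with hW
    have hmW : MatchesW (DTree.node i tL tR) W := ⟨hmL, hmR⟩
    have hpW : W.Pos := ⟨by linarith, by linarith, hpL, hpR⟩
    have hdevL := WTree.devCost_nonneg hpL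
    have hdevR := WTree.devCost_nonneg hpR
    have hpathL := WTree.pathCost_nonneg hpL
    have hpathR := WTree.pathCost_nonneg hpR
    have hinv0 : 1 / (c - b) = c - a := by
      rw [div_eq_iff (ne_of_gt (by linarith : (0:ℝ) < c - b))]
      linarith [hprod]
    have hinv1 : 1 / (c - a) = c - b := by
      rw [div_eq_iff (ne_of_gt (by linarith : (0:ℝ) < c - a))]
      nlinarith [hprod]
    have hdevW : W.devCost ≤ c + δ := by
      show max ((c - a) + wL.devCost) ((c - b) + wR.devCost) ≤ c + δ
      apply max_le <;> linarith
    have hpathW : W.pathCost ≤ c + δ := by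
      show max (1 / (c - b) + wL.pathCost) (1 / (c - a) + wR.pathCost) ≤ c + δ
      rw [hinv0, hinv1]
      apply max_le <;> linarith
    calc OPT (DTree.node i tL tR) ≤ Real.sqrt (W.devCost * W.pathCost) := OPT_le hmW hpW
      _ ≤ Real.sqrt ((c + δ) * (c + δ)) := Real.sqrt_le_sqrt
          (mul_le_mul hdevW hpathW (WTree.pathCost_nonneg hpW) (by linarith))
      _ = c + δ := Real.sqrt_mul_self (by linarith)
  · -- lower bound
    rw [OPT_eq_sInf]
    apply le_csInf (Sset_nonempty _)
    rintro v ⟨w, hm, hp, rfl⟩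
    cases w with
    | leaf => exact hm.elim
    | node w0 w1 c0 c1 =>
      obtain ⟨hm0, hm1⟩ : MatchesW tL c0 ∧ MatchesW tR c1 := hm
      obtain ⟨hw0, hw1, hp0, hp1⟩ := hp
      set dL := c0.devCost with hdLd
      set pL := c0.pathCost with hpLd
      set dR := c1.devCost with hdRd
      set pR := c1.pathCost with hpRd
      have hdL0 : 0 ≤ dL := WTree.devCost_nonneg hp0
      have hpL0 : 0 ≤ pL := WTree.pathCost_nonneg hp0
      have hdR0 : 0 ≤ dR := WTree.devCost_nonneg hp1
      have hpR0 : 0 ≤ pR := WTree.pathCost_nonneg hp1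
      have hdev : (WTree.node w0 w1 c0 c1).devCost = max (w1 + dL) (w0 + dR) := rfl
      have hpath : (WTree.node w0 w1 c0 c1).pathCost
          = max (1 / w0 + pL) (1 / w1 + pR) := rfl
      rw [hdev, hpath]
      set D := max (w1 + dL) (w0 + dR) with hDd
      set P := max (1 / w0 + pL) (1 / w1 + pR) with hPd
      have hD : 0 < D := lt_of_lt_of_le (by linarith) (le_max_left (w1 + dL) (w0 + dR))
      have hP : 0 < P := by
        have h01 : 0 < 1 / w0 + pL := by positivity
        exact lt_of_lt_of_le h01 (le_max_left _ _)
      set s := Real.sqrt (D * P) with hsd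
      have hs : 0 < s := Real.sqrt_pos.2 (mul_pos hD hP)
      have hs2 : s ^ 2 = D * P := Real.sq_sqrt (mul_pos hD hP).le
      set l := s / D with hld
      have hl : 0 < l := div_pos hs hD
      have hlne : l ≠ 0 := ne_of_gt hl
      have hw0ne : w0 ≠ 0 := ne_of_gt hw0
      have hw1ne : w1 ≠ 0 := ne_of_gt hw1
      have hlD : l * D = s := by
        rw [hld]; exact div_mul_cancel₀ s (ne_of_gt hD)
      have hPl : P / l = s := by
        rw [hld, div_div_eq_mul_div, div_eq_iff (ne_of_gt hs)]
        linear_combination -hs2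
      obtain ⟨hsum, hsq⟩ := core a b (l * w0) (l * w1) (l * dL) (pL / l) (l * dR) (pR / l) s
        ha hb (by positivity) (by positivity)
        (mul_nonneg hl.le hdL0) (div_nonneg hpL0 hl.le)
        (mul_nonneg hl.le hdR0) (div_nonneg hpR0 hl.le)
        (by rw [show l * dL * (pL / l) = dL * pL by field_simp [hlne]]
            exact sq_OPT_le hm0 hp0)
        (by rw [show l * dR * (pR / l) = dR * pR by field_simp [hlne]]
            exact sq_OPT_le hm1 hp1)
        (by rw [← hlD, ← mul_add]
            exact mul_le_mul_of_nonneg_left (le_max_left _ _) hl.le)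
        (by rw [← hlD, ← mul_add]
            exact mul_le_mul_of_nonneg_left (le_max_right _ _) hl.le)
        (by rw [show 1 / (l * w0) + pL / l = (1 / w0 + pL) / l by
              field_simp]
            rw [← hPl]
            exact (div_le_div_iff_of_pos_right hl).2 (le_max_left _ _))
        (by rw [show 1 / (l * w1) + pR / l = (1 / w1 + pR) / l by
              field_simp]
            rw [← hPl]
            exact (div_le_div_iff_of_pos_right hl).2 (le_max_right _ _))
      have h2s : r ≤ 2 * s - a - b := by
        have hle := Real.sqrt_le_sqrt hsq
        rw [Real.sqrt_sq (by linarith : (0:ℝ) ≤ 2 * s - a - b)] at hle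
        rw [hrr]
        exact hle
      rw [hcc]
      linarith
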